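/- arXiv:1607.02101 — 4 statements merged into one kernel-verified Lean document; each statement's English description precedes it below -/
import Mathlib

section
/- Let w be a Schwarz function with Taylor expansion w(z) = w₁z + w₂z² + ⋯, and let t be a real number with −1 < t ≤ 0. Then |w₂ − t·w₁²| + (1 + t)·|w₁|² ≤ 1. -/
/-!
Write `w z = z * g z` with `g = dslope w 0`. By Schwarz's lemma `g` maps the disk into the closed
disk, and `g 0 = w₁`, `g' 0 = w₂`. The Schwarz–Pick estimate `‖g' 0‖ ≤ 1 - ‖g 0‖²` (Schwarz's
lemma for `g` followed by the disk automorphism moving `g 0` to `0`, or the maximum modulus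
principle when `‖g 0‖ = 1`) gives `‖w₂‖ ≤ 1 - ‖w₁‖²`, and for `t ≤ 0` the triangle inequality
`‖w₂ - t w₁²‖ ≤ ‖w₂‖ - t ‖w₁‖²` finishes the proof.
-/

open Metric Set Complex Filter Topology ComplexConjugate

section DSlope

variable {𝕜 E : Type*} [NontriviallyNormedField 𝕜] [NormedAddCommGroup E] [NormedSpace 𝕜 E]
  {f : 𝕜 → E} {c : 𝕜}

theorem analyticAt_dslope (hf : AnalyticAt 𝕜 f c) : AnalyticAt 𝕜 (dslope f c) c :=
  let ⟨_, hp⟩ := hf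
  hp.has_fpower_series_dslope_fslope.analyticAt

theorem iteratedDeriv_two_eq_two_smul_deriv_dslope [CompleteSpace E] (hf : AnalyticAt 𝕜 f c) :
    iteratedDeriv 2 f c = (2 : 𝕜) • deriv (dslope f c) c := by
  set g := dslope f c
  have hg : AnalyticAt 𝕜 g c := analyticAt_dslope hf
  have hf_eq : f = fun z => f c + (z - c) • g z := by
    funext z
    rw [sub_smul_dslope, add_sub_cancel]
  have hderiv : deriv f =ᶠ[𝓝 c] fun z => (z - c) • deriv g z + g z := by
    filter_upwards [hg.eventually_analyticAt] with z hz
    rw [hf_eq]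
    refine ((((hasDerivAt_id z).sub_const c).smul hz.differentiableAt.hasDerivAt).const_add
      (f c)).deriv.trans ?_
    simp only [id, one_smul]
  have hsecond : HasDerivAt (fun z => (z - c) • deriv g z + g z)
      ((c - c) • deriv (deriv g) c + (1 : 𝕜) • deriv g c + deriv g c) c :=
    (((hasDerivAt_id c).sub_const c).smul hg.deriv.differentiableAt.hasDerivAt).add
      hg.differentiableAt.hasDerivAt
  rw [iteratedDeriv_succ, iteratedDeriv_one, hderiv.deriv_eq, hsecond.deriv]
  simp only [sub_self, zero_smul, one_smul, zero_add, two_smul]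

end DSlope

namespace Complex

theorem norm_sub_le_norm_one_sub_conj_mul {a z : ℂ} (ha : ‖a‖ ≤ 1) (hz : ‖z‖ ≤ 1) :
    ‖z - a‖ ≤ ‖1 - conj a * z‖ := by
  have hdiff : normSq (1 - conj a * z) - normSq (z - a) = (1 - normSq a) * (1 - normSq z) := by
    simp only [normSq_apply, sub_re, sub_im, mul_re, mul_im, conj_re, conj_im, one_re, one_im]
    ring
  rw [← sq_le_sq₀ (norm_nonneg _) (norm_nonneg _), Complex.sq_norm, Complex.sq_norm]
  have ha' : normSq a ≤ 1 := by rw [← Complex.sq_norm]; nlinarith [norm_nonneg a]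
  have hz' : normSq z ≤ 1 := by rw [← Complex.sq_norm]; nlinarith [norm_nonneg z]
  nlinarith

theorem one_sub_conj_mul_ne_zero {a z : ℂ} (ha : ‖a‖ < 1) (hz : ‖z‖ ≤ 1) :
    1 - conj a * z ≠ 0 := by
  refine sub_ne_zero.mpr fun h => ?_
  have : ‖conj a * z‖ < 1 := by
    rw [norm_mul, norm_conj]
    exact mul_lt_one_of_nonneg_of_lt_one_left (norm_nonneg a) ha hz
  rw [← h, norm_one] at this
  exact this.false

noncomputable def diskMoebius (a z : ℂ) : ℂ := (z - a) / (1 - conj a * z)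

theorem diskMoebius_self (a : ℂ) : diskMoebius a a = 0 := by
  simp [diskMoebius]

theorem norm_diskMoebius_le_one {a z : ℂ} (ha : ‖a‖ < 1) (hz : ‖z‖ ≤ 1) :
    ‖diskMoebius a z‖ ≤ 1 := by
  rw [diskMoebius, norm_div, div_le_one (norm_pos_iff.mpr (one_sub_conj_mul_ne_zero ha hz))]
  exact norm_sub_le_norm_one_sub_conj_mul ha.le hz

theorem hasDerivAt_diskMoebius {a z : ℂ} (hz : 1 - conj a * z ≠ 0) :
    HasDerivAt (diskMoebius a) ((1 - conj a * a) / (1 - conj a * z) ^ 2) z := by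
  have hnum : HasDerivAt (fun x => x - a) 1 z := (hasDerivAt_id' z).sub_const a
  have hden : HasDerivAt (fun x => 1 - conj a * x) (-conj a) z := by
    simpa using ((hasDerivAt_id' z).const_mul (conj a)).const_sub 1
  exact (hnum.div hden hz).congr_deriv (by ring)

theorem hasDerivAt_diskMoebius_self {a : ℂ} (ha : ‖a‖ < 1) :
    HasDerivAt (diskMoebius a) ((1 - ‖a‖ ^ 2 : ℝ) : ℂ)⁻¹ a := by
  have hden : 1 - conj a * a ≠ 0 := one_sub_conj_mul_ne_zero ha ha.le
  convert hasDerivAt_diskMoebius hden using 1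
  rw [mul_comm, mul_conj, ← Complex.sq_norm] at hden ⊢
  push_cast
  field_simp

theorem differentiableOn_diskMoebius {a : ℂ} (ha : ‖a‖ < 1) :
    DifferentiableOn ℂ (diskMoebius a) (closedBall 0 1) := fun _ hz =>
  (hasDerivAt_diskMoebius (one_sub_conj_mul_ne_zero ha (mem_closedBall_zero_iff.mp hz)))
    |>.differentiableAt.differentiableWithinAt

theorem deriv_eq_zero_of_isLocalMax_norm {F : Type*} [NormedAddCommGroup F] [NormedSpace ℂ F]
    [StrictConvexSpace ℝ F] {f : ℂ → F} {c : ℂ} (hd : ∀ᶠ z in 𝓝 c, DifferentiableAt ℂ f z)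
    (hc : IsLocalMax (norm ∘ f) c) : deriv f c = 0 :=
  have hconst : f =ᶠ[𝓝 c] fun _ => f c := eventually_eq_of_isLocalMax_norm hd hc
  hconst.deriv_eq.trans (deriv_const c (f c))

theorem norm_deriv_le_one_sub_sq_norm_of_norm_lt_one {f : ℂ → ℂ}
    (hd : DifferentiableOn ℂ f (ball 0 1)) (hf : MapsTo f (ball 0 1) (closedBall 0 1))
    (h0 : ‖f 0‖ < 1) : ‖deriv f 0‖ ≤ 1 - ‖f 0‖ ^ 2 := by
  set a := f 0
  have hpos : 0 < 1 - ‖a‖ ^ 2 := by nlinarith [norm_nonneg a]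
  have hderiv : HasDerivAt (diskMoebius a ∘ f) (((1 - ‖a‖ ^ 2 : ℝ) : ℂ)⁻¹ * deriv f 0) 0 :=
    (hasDerivAt_diskMoebius_self h0).comp 0
      (hd.differentiableAt (ball_mem_nhds 0 one_pos)).hasDerivAt
  have hmaps : MapsTo (diskMoebius a ∘ f) (ball 0 1) (closedBall (diskMoebius a a) 1) :=
    fun z hz => by
      rw [diskMoebius_self, mem_closedBall_zero_iff]
      exact norm_diskMoebius_le_one h0 (mem_closedBall_zero_iff.mp (hf hz))
  have hschwarz := norm_deriv_le_div_of_mapsTo_ball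
    ((differentiableOn_diskMoebius h0).comp hd hf) hmaps one_pos
  rwa [hderiv.deriv, norm_mul, norm_inv, norm_real, Real.norm_of_nonneg hpos.le, div_one,
    inv_mul_le_iff₀ hpos, mul_one] at hschwarz

theorem norm_deriv_le_one_sub_sq_norm {f : ℂ → ℂ} (hd : DifferentiableOn ℂ f (ball 0 1))
    (hf : MapsTo f (ball 0 1) (closedBall 0 1)) : ‖deriv f 0‖ ≤ 1 - ‖f 0‖ ^ 2 := by
  have hf0 : ‖f 0‖ ≤ 1 := mem_closedBall_zero_iff.mp (hf (mem_ball_self one_pos))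
  rcases hf0.eq_or_lt with hf0 | hf0
  · have hmax : IsLocalMax (norm ∘ f) 0 :=
      mem_of_superset (ball_mem_nhds 0 one_pos) fun z hz => by
        simpa [hf0] using hf hz
    rw [deriv_eq_zero_of_isLocalMax_norm (hd.eventually_differentiableAt
      (ball_mem_nhds 0 one_pos)) hmax, hf0]
    norm_num
  · exact norm_deriv_le_one_sub_sq_norm_of_norm_lt_one hd hf hf0

end Complex

theorem schwarz_coeff_bound_improved_nonpos_general
    (w : ℂ → ℂ)
    (hw : AnalyticOnNhd ℂ w (Metric.ball (0 : ℂ) 1))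
    (hw0 : w 0 = 0)
    (hwb : ∀ z ∈ Metric.ball (0 : ℂ) 1, ‖w z‖ < 1)
    (w1 w2 : ℂ)
    (hw1 : w1 = deriv w 0)
    (hw2 : w2 = iteratedDeriv 2 w 0 / 2)
    (t : ℝ) (ht2 : t ≤ 0) :
    ‖w2 - (t : ℂ) * w1 ^ 2‖ + (1 + t) * ‖w1‖ ^ 2 ≤ 1 := by
  set g := dslope w 0 with hg
  have hw_maps : MapsTo w (ball 0 1) (closedBall (w 0) 1) := fun z hz =>
    mem_closedBall.mpr (by simpa [hw0] using (hwb z hz).le)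
  have hg_diff : DifferentiableOn ℂ g (ball 0 1) :=
    (differentiableOn_dslope (ball_mem_nhds 0 one_pos)).mpr hw.differentiableOn
  have hg_maps : MapsTo g (ball 0 1) (closedBall 0 1) := fun z hz => by
    simpa using norm_dslope_le_div_of_mapsTo_ball hw.differentiableOn hw_maps hz
  have hg0 : g 0 = w1 := by rw [hg, dslope_same, hw1]
  have hg'0 : deriv g 0 = w2 := by
    rw [hw2, iteratedDeriv_two_eq_two_smul_deriv_dslope (hw 0 (mem_ball_self one_pos)),
      smul_eq_mul]
    ring
  have hpick : ‖w2‖ ≤ 1 - ‖w1‖ ^ 2 := hg0 ▸ hg'0 ▸ norm_deriv_le_one_sub_sq_norm hg_diff hg_maps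
  have htri : ‖w2 - (t : ℂ) * w1 ^ 2‖ ≤ ‖w2‖ - t * ‖w1‖ ^ 2 := by
    refine (norm_sub_le _ _).trans_eq ?_
    rw [norm_mul, norm_pow, norm_real, Real.norm_of_nonpos ht2]
    ring
  linarith

theorem schwarz_coeff_bound_improved_nonpos
    (w : ℂ → ℂ)
    (hw : AnalyticOnNhd ℂ w (Metric.ball (0 : ℂ) 1))
    (hw0 : w 0 = 0)
    (hwb : ∀ z ∈ Metric.ball (0 : ℂ) 1, ‖w z‖ < 1)
    (w1 w2 : ℂ)
    (hw1 : w1 = deriv w 0)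
    (hw2 : w2 = iteratedDeriv 2 w 0 / 2)
    (t : ℝ) (ht1 : -1 < t) (ht2 : t ≤ 0) :
    ‖w2 - (t : ℂ) * w1 ^ 2‖ + (1 + t) * ‖w1‖ ^ 2 ≤ 1 :=
  schwarz_coeff_bound_improved_nonpos_general w hw hw0 hwb w1 w2 hw1 hw2 t ht2
end

section
/- Under the stated spirallike-starlike subordination hypothesis, writing ϑ₂ = [2]_q − 1 and ϑ₃ = [3]_q − 1, for every complex number μ one has a₃ − μ·a₂² = (10·b/(ϱ·ϑ₃))·( p₁·w₂ + ( p₂ + b·p₁²·(10·ϑ₂ − 9·μ·ϑ₃)/(10·ϱ·ϑ₂²) )·w₁² ). -/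
/-!
Multiplying the subordination by `b * F z` turns it into the identity
`b * p (w z) * F z = b * F z + ϱ * (z * D_qF z - F z)`, whose right side has the power series
`∑ (b + ϱ * ([n]_q - 1)) * cₙ * zⁿ`, where `cₙ` are the coefficients of `F`. The left side is the
Cauchy product of `b * (p ∘ w)` and `F`, whose Taylor coefficients follow from the Leibniz rule and
the second-order chain rule. Comparing the coefficients of `z²` and `z³` gives
`ϱ ϑ₂ c₂ = b p₁ w₁` and `ϱ ϑ₃ c₃ = b (p₂ w₁² + p₁ w₂ + p₁ w₁ c₂)`; as `c₂ = -a₂ / 3` and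
`c₃ = a₃ / 10`, the identity is then field arithmetic.
-/

open Filter Topology Nat

def qNumber {K : Type*} [DivisionRing K] (q : K) (n : ℕ) : K := (1 - q ^ n) / (1 - q)

section qNumber

variable {K : Type*} [Field K] {q : K}

theorem qNumber_two_sub_one (hq : q ≠ 1) : qNumber q 2 - 1 = q := by
  rw [qNumber, div_sub_one (sub_ne_zero.mpr hq.symm)]
  field_simp
  ring

theorem qNumber_three_sub_one (hq : q ≠ 1) : qNumber q 3 - 1 = q + q ^ 2 := by
  rw [qNumber, div_sub_one (sub_ne_zero.mpr hq.symm)]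
  field_simp
  ring

end qNumber

section PowerSeries

variable {𝕜 : Type*} [NontriviallyNormedField 𝕜]

theorem hasFPowerSeriesAt_ofScalars_of_hasSum {f : 𝕜 → 𝕜} {c : ℕ → 𝕜} {r : ℝ} (hr : 0 < r)
    (hf : ∀ z ∈ Metric.ball (0 : 𝕜) r, HasSum (fun n => c n * z ^ n) (f z)) :
    HasFPowerSeriesAt f (FormalMultilinearSeries.ofScalars 𝕜 c) 0 := by
  rw [hasFPowerSeriesAt_iff]
  filter_upwards [Metric.ball_mem_nhds (0 : 𝕜) hr] with z hz
  simpa [FormalMultilinearSeries.coeff_ofScalars, mul_comm] using hf z hz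

theorem hasSum_qDifference {F : 𝕜 → 𝕜} {c : ℕ → 𝕜} {r : ℝ} {q : 𝕜} (hq : ‖q‖ ≤ 1)
    (hF : ∀ z ∈ Metric.ball (0 : 𝕜) r, HasSum (fun n => c n * z ^ n) (F z))
    {z : 𝕜} (hz : z ∈ Metric.ball 0 r) :
    HasSum (fun n => qNumber q n * c n * z ^ n) ((F z - F (q * z)) / (1 - q)) := by
  have hqz : q * z ∈ Metric.ball (0 : 𝕜) r := by
    rw [mem_ball_zero_iff] at hz ⊢
    rw [norm_mul]
    exact lt_of_le_of_lt (mul_le_of_le_one_left (norm_nonneg z) hq) hz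
  convert ((hF z hz).sub (hF (q * z) hqz)).div_const (1 - q) using 2 with n
  simp only [qNumber, mul_pow]
  ring

theorem mul_eventuallyEq_of_subordination {F DqF p w : 𝕜 → 𝕜} {q ϱ b : 𝕜} (hb : b ≠ 0)
    (hF0 : F 0 = 0) (hFne : ∀ z ∈ Metric.ball (0 : 𝕜) 1, z ≠ 0 → F z ≠ 0)
    (hDqF : ∀ z : 𝕜, z ≠ 0 → DqF z = (F z - F (q * z)) / ((1 - q) * z))
    (hsub : ∀ z ∈ Metric.ball (0 : 𝕜) 1, z ≠ 0 →
      1 + (1 / b) * (ϱ * (z * DqF z / F z) - ϱ) = p (w z)) :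
    (fun z => b * p (w z) * F z) =ᶠ[𝓝 0]
      fun z => b * F z + ϱ * ((F z - F (q * z)) / (1 - q) - F z) := by
  filter_upwards [Metric.ball_mem_nhds (0 : 𝕜) one_pos] with z hz
  rcases eq_or_ne z 0 with rfl | hz0
  · simp [hF0]
  · have hzD : z * DqF z = (F z - F (q * z)) / (1 - q) := by
      rw [hDqF z hz0, mul_comm (1 - q) z, ← div_div, ← mul_div_assoc, mul_div_cancel₀ _ hz0]
    rw [← hsub z hz hz0, hzD]
    field_simp [hFne z hz hz0]

variable [CompleteSpace 𝕜]

theorem iteratedDeriv_eq_factorial_mul_of_hasSum {f : 𝕜 → 𝕜} {c : ℕ → 𝕜} {r : ℝ} (hr : 0 < r)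
    (hf : ∀ z ∈ Metric.ball (0 : 𝕜) r, HasSum (fun n => c n * z ^ n) (f z)) (n : ℕ) :
    iteratedDeriv n f 0 = n ! * c n := by
  obtain ⟨ρ, hρ⟩ := hasFPowerSeriesAt_ofScalars_of_hasSum hr hf
  simpa [iteratedDeriv_eq_iteratedFDeriv, FormalMultilinearSeries.ofScalars_apply_eq]
    using (hρ.factorial_smul 1 n).symm

theorem iteratedDeriv_two_comp {p w : 𝕜 → 𝕜} {x : 𝕜} (hw : AnalyticAt 𝕜 w x)
    (hp : AnalyticAt 𝕜 p (w x)) :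
    iteratedDeriv 2 (fun z => p (w z)) x =
      iteratedDeriv 2 p (w x) * deriv w x ^ 2 + deriv p (w x) * iteratedDeriv 2 w x := by
  have hchain : deriv (fun z => p (w z)) =ᶠ[𝓝 x] fun z => deriv p (w z) * deriv w z := by
    filter_upwards [hw.eventually_analyticAt,
      hw.continuousAt.eventually hp.eventually_analyticAt] with z hwz hpz
    exact deriv_comp z hpz.differentiableAt hwz.differentiableAt
  have hp' : DifferentiableAt 𝕜 (fun z => deriv p (w z)) x :=
    hp.deriv.differentiableAt.comp x hw.differentiableAt
  have hp'' : deriv (fun z => deriv p (w z)) x = deriv (deriv p) (w x) * deriv w x :=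
    deriv_comp x hp.deriv.differentiableAt hw.differentiableAt
  simp only [iteratedDeriv_succ, iteratedDeriv_zero]
  rw [hchain.deriv_eq, deriv_fun_mul hp' hw.deriv.differentiableAt, hp'']
  ring

variable [CharZero 𝕜]

theorem iteratedDeriv_mul_eq_of_hasSum {P F : 𝕜 → 𝕜} {c : ℕ → 𝕜} {r : ℝ} (hr : 0 < r)
    (hP : AnalyticAt 𝕜 P 0)
    (hF : ∀ z ∈ Metric.ball (0 : 𝕜) r, HasSum (fun n => c n * z ^ n) (F z)) (n : ℕ) :
    iteratedDeriv n (fun z => P z * F z) 0 =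
      n ! * ∑ i ∈ Finset.range (n + 1), iteratedDeriv i P 0 / i ! * c (n - i) := by
  have hFa := (hasFPowerSeriesAt_ofScalars_of_hasSum hr hF).analyticAt
  rw [iteratedDeriv_fun_mul hP.contDiffAt hFa.contDiffAt, Finset.mul_sum]
  refine Finset.sum_congr rfl fun i hi => ?_
  have hin : i ≤ n := Nat.lt_succ_iff.mp (Finset.mem_range.mp hi)
  have hi0 : (i ! : 𝕜) ≠ 0 := by exact_mod_cast i.factorial_ne_zero
  rw [iteratedDeriv_eq_factorial_mul_of_hasSum hr hF, ← Nat.choose_mul_factorial_mul_factorial hin]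
  push_cast
  field_simp

theorem coeff_eq_sum_of_mul_eventuallyEq {P F : 𝕜 → 𝕜} {c : ℕ → 𝕜} {r : ℝ} {q ϱ b : 𝕜}
    (hr : 0 < r) (hq : ‖q‖ ≤ 1) (hP : AnalyticAt 𝕜 P 0)
    (hF : ∀ z ∈ Metric.ball (0 : 𝕜) r, HasSum (fun n => c n * z ^ n) (F z))
    (hPF : (fun z => P z * F z) =ᶠ[𝓝 0]
      fun z => b * F z + ϱ * ((F z - F (q * z)) / (1 - q) - F z)) (n : ℕ) :
    (b + ϱ * (qNumber q n - 1)) * c n =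
      ∑ i ∈ Finset.range (n + 1), iteratedDeriv i P 0 / i ! * c (n - i) := by
  have hsum : ∀ z ∈ Metric.ball (0 : 𝕜) r,
      HasSum (fun n => (b + ϱ * (qNumber q n - 1)) * c n * z ^ n)
        (b * F z + ϱ * ((F z - F (q * z)) / (1 - q) - F z)) := fun z hz => by
    have hterm : (fun n => (b + ϱ * (qNumber q n - 1)) * c n * z ^ n) =
        fun n => b * (c n * z ^ n) + ϱ * (qNumber q n * c n * z ^ n - c n * z ^ n) := by
      funext n
      ring
    rw [hterm]
    exact ((hF z hz).mul_left b).add (((hasSum_qDifference hq hF hz).sub (hF z hz)).mul_left ϱ)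
  have h := (hPF.iteratedDeriv_eq n).symm
  rw [iteratedDeriv_eq_factorial_mul_of_hasSum hr hsum,
    iteratedDeriv_mul_eq_of_hasSum hr hP hF] at h
  exact mul_left_cancel₀ (by exact_mod_cast n.factorial_ne_zero) h

theorem coeff_relations_of_subordination {F DqF p w : 𝕜 → 𝕜} {c : ℕ → 𝕜} {q ϱ b : 𝕜}
    (hq : ‖q‖ ≤ 1) (hb : b ≠ 0) (hc0 : c 0 = 0) (hc1 : c 1 = 1)
    (hF : ∀ z ∈ Metric.ball (0 : 𝕜) 1, HasSum (fun n => c n * z ^ n) (F z))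
    (hw : AnalyticAt 𝕜 w 0) (hw0 : w 0 = 0) (hp : AnalyticAt 𝕜 p 0) (hp0 : p 0 = 1)
    (hFne : ∀ z ∈ Metric.ball (0 : 𝕜) 1, z ≠ 0 → F z ≠ 0)
    (hDqF : ∀ z : 𝕜, z ≠ 0 → DqF z = (F z - F (q * z)) / ((1 - q) * z))
    (hsub : ∀ z ∈ Metric.ball (0 : 𝕜) 1, z ≠ 0 →
      1 + (1 / b) * (ϱ * (z * DqF z / F z) - ϱ) = p (w z)) :
    ϱ * (qNumber q 2 - 1) * c 2 = b * (deriv p 0 * deriv w 0) ∧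
      ϱ * (qNumber q 3 - 1) * c 3 = b * (iteratedDeriv 2 p 0 / 2 * deriv w 0 ^ 2 +
        deriv p 0 * (iteratedDeriv 2 w 0 / 2) + deriv p 0 * deriv w 0 * c 2) := by
  have hF0 : F 0 = 0 := by
    simpa [hc0] using iteratedDeriv_eq_factorial_mul_of_hasSum one_pos hF 0
  rw [← hw0] at hp
  have hcoeff := coeff_eq_sum_of_mul_eventuallyEq (P := fun z => b * p (w z)) one_pos hq
    (analyticAt_const.mul (hp.comp hw)) hF
    (mul_eventuallyEq_of_subordination hb hF0 hFne hDqF hsub)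
  have hpw : deriv (fun z => p (w z)) 0 = deriv p (w 0) * deriv w 0 :=
    deriv_comp 0 hp.differentiableAt hw.differentiableAt
  have h₂ := hcoeff 2
  have h₃ := hcoeff 3
  simp only [reduceAdd, iteratedDeriv_const_mul_field, Finset.sum_range_succ, Finset.range_one,
    Finset.sum_singleton, iteratedDeriv_zero, hw0, hp0, mul_one, factorial_zero, cast_one, div_one,
    tsub_zero, iteratedDeriv_one, hpw, factorial_one, Nat.add_one_sub_one, hc1,
    iteratedDeriv_two_comp hw hp, factorial_two, cast_ofNat, tsub_self, hc0, mul_zero, add_zero,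
    reduceSub] at h₂ h₃
  constructor
  · linear_combination h₂
  · linear_combination h₃

end PowerSeries

theorem fekete_szego_of_coeff_eq {K : Type*} [Field K] [CharZero K]
    {a₂ a₃ b ϱ ϑ₂ ϑ₃ p₁ p₂ w₁ w₂ : K} (hϱ : ϱ ≠ 0) (hϑ₂ : ϑ₂ ≠ 0) (hϑ₃ : ϑ₃ ≠ 0)
    (h₂ : ϱ * ϑ₂ * a₂ = -3 * b * p₁ * w₁)
    (h₃ : ϱ * ϑ₃ * a₃ = 10 * b * (p₂ * w₁ ^ 2 + p₁ * w₂) - 10 / 3 * b * p₁ * w₁ * a₂) (μ : K) :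
    a₃ - μ * a₂ ^ 2 = 10 * b / (ϱ * ϑ₃) *
      (p₁ * w₂ + (p₂ + b * p₁ ^ 2 * (10 * ϑ₂ - 9 * μ * ϑ₃) / (10 * ϱ * ϑ₂ ^ 2)) * w₁ ^ 2) := by
  have ha₂ : a₂ = -3 * b * p₁ * w₁ / (ϱ * ϑ₂) := by
    rw [eq_div_iff (mul_ne_zero hϱ hϑ₂)]
    linear_combination h₂
  have ha₃ : a₃ =
      (10 * b * (p₂ * w₁ ^ 2 + p₁ * w₂) - 10 / 3 * b * p₁ * w₁ * a₂) / (ϱ * ϑ₃) := by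
    rw [eq_div_iff (mul_ne_zero hϱ hϑ₃)]
    linear_combination h₃
  rw [ha₃, ha₂]
  field_simp
  ring

theorem starlike_fekete_szego_identity_general
    (q : ℝ) (hq0 : 0 < q) (hq1 : q < 1)
    (a : ℕ → ℂ) (ha0 : a 0 = 0) (ha1 : a 1 = 1)
    (F DqF : ℂ → ℂ)
    (hF : ∀ z ∈ Metric.ball (0 : ℂ) 1,
      HasSum (fun n : ℕ =>
        (-1 : ℂ) ^ (n - 1) * a n / (((2 * n - 1 : ℕ) : ℂ) * ((n - 1).factorial : ℂ)) * z ^ n)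
        (F z))
    (hDqF : ∀ z : ℂ, z ≠ 0 → DqF z = (F z - F ((q : ℂ) * z)) / ((1 - (q : ℂ)) * z))
    (ϑ2 ϑ3 : ℝ)
    (hϑ2 : ϑ2 = (1 - q ^ 2) / (1 - q) - 1)
    (hϑ3 : ϑ3 = (1 - q ^ 3) / (1 - q) - 1)
    (w : ℂ → ℂ)
    (hw : AnalyticOnNhd ℂ w (Metric.ball (0 : ℂ) 1))
    (hw0 : w 0 = 0)
    (w1 w2 : ℂ) (hw1 : w1 = deriv w 0) (hw2 : w2 = iteratedDeriv 2 w 0 / 2)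
    (β : ℝ)
    (ϱ : ℂ) (hϱ : ϱ = 1 + Complex.I * (Real.tan β : ℂ))
    (b : ℂ) (hb : b ≠ 0)
    (p : ℂ → ℂ)
    (hp : AnalyticOnNhd ℂ p (Metric.ball (0 : ℂ) 1))
    (hp0 : p 0 = 1)
    (p1 p2 : ℂ) (hp1 : p1 = deriv p 0) (hp2 : p2 = iteratedDeriv 2 p 0 / 2)
    (hFne : ∀ z ∈ Metric.ball (0 : ℂ) 1, z ≠ 0 → F z ≠ 0)
    (hsub : ∀ z ∈ Metric.ball (0 : ℂ) 1, z ≠ 0 →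
      1 + (1 / b) * (ϱ * (z * DqF z / F z) - ϱ) = p (w z))
    :
    ∀ μ : ℂ, a 3 - μ * (a 2) ^ 2 = (10 * b / (ϱ * (ϑ3 : ℂ))) *
      (p1 * w2 +
        (p2 + b * p1 ^ 2 * (10 * (ϑ2 : ℂ) - 9 * μ * (ϑ3 : ℂ)) / (10 * ϱ * (ϑ2 : ℂ) ^ 2))
          * w1 ^ 2) := by
  have hq : ‖(q : ℂ)‖ ≤ 1 := by
    rw [Complex.norm_real, Real.norm_of_nonneg hq0.le]
    exact hq1.le
  have hqC : (q : ℂ) ≠ 1 := by exact_mod_cast hq1.ne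
  obtain ⟨h₂, h₃⟩ := coeff_relations_of_subordination hq hb (by simp [ha0]) (by simp [ha1]) hF
    (hw 0 (Metric.mem_ball_self one_pos)) hw0 (hp 0 (Metric.mem_ball_self one_pos)) hp0
    hFne hDqF hsub
  rw [qNumber_two_sub_one hqC] at h₂
  rw [qNumber_three_sub_one hqC] at h₃
  norm_num [Nat.factorial] at h₂ h₃
  rw [← hp1, ← hw1, ← hp2, ← hw2] at h₃
  rw [← hp1, ← hw1] at h₂
  have hϱ0 : ϱ ≠ 0 := by
    rintro rfl
    simpa using congrArg Complex.re hϱ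
  have hqq : (0 : ℝ) < q + q ^ 2 := by positivity
  rw [hϑ2.trans (qNumber_two_sub_one hq1.ne), hϑ3.trans (qNumber_three_sub_one hq1.ne)]
  push_cast
  exact fekete_szego_of_coeff_eq hϱ0 (by exact_mod_cast hq0.ne') (by exact_mod_cast hqq.ne')
    (by linear_combination (-3) * h₂) (by linear_combination 10 * h₃)

theorem starlike_fekete_szego_identity
    (q : ℝ) (hq0 : 0 < q) (hq1 : q < 1)
    (a : ℕ → ℂ) (ha0 : a 0 = 0) (ha1 : a 1 = 1)
    (f F DqF : ℂ → ℂ)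
    (hf : ∀ z ∈ Metric.ball (0 : ℂ) 1, HasSum (fun n : ℕ => a n * z ^ n) (f z))
    (hF : ∀ z ∈ Metric.ball (0 : ℂ) 1,
      HasSum (fun n : ℕ =>
        (-1 : ℂ) ^ (n - 1) * a n / (((2 * n - 1 : ℕ) : ℂ) * ((n - 1).factorial : ℂ)) * z ^ n)
        (F z))
    (hDq0 : DqF 0 = 1)
    (hDqF : ∀ z : ℂ, z ≠ 0 → DqF z = (F z - F ((q : ℂ) * z)) / ((1 - (q : ℂ)) * z))
    (ϑ2 ϑ3 : ℝ)
    (hϑ2 : ϑ2 = (1 - q ^ 2) / (1 - q) - 1)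
    (hϑ3 : ϑ3 = (1 - q ^ 3) / (1 - q) - 1)
    (w : ℂ → ℂ)
    (hw : AnalyticOnNhd ℂ w (Metric.ball (0 : ℂ) 1))
    (hw0 : w 0 = 0)
    (hwb : ∀ z ∈ Metric.ball (0 : ℂ) 1, ‖w z‖ < 1)
    (w1 w2 : ℂ) (hw1 : w1 = deriv w 0) (hw2 : w2 = iteratedDeriv 2 w 0 / 2)
    (β : ℝ) (hβ1 : -(Real.pi / 2) < β) (hβ2 : β < Real.pi / 2)
    (ϱ : ℂ) (hϱ : ϱ = 1 + Complex.I * (Real.tan β : ℂ))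
    (b : ℂ) (hb : b ≠ 0)
    (p : ℂ → ℂ)
    (hp : AnalyticOnNhd ℂ p (Metric.ball (0 : ℂ) 1))
    (hp0 : p 0 = 1)
    (p1 p2 : ℂ) (hp1 : p1 = deriv p 0) (hp2 : p2 = iteratedDeriv 2 p 0 / 2)
    (hFne : ∀ z ∈ Metric.ball (0 : ℂ) 1, z ≠ 0 → F z ≠ 0)
    (hsub : ∀ z ∈ Metric.ball (0 : ℂ) 1, z ≠ 0 →
      1 + (1 / b) * (ϱ * (z * DqF z / F z) - ϱ) = p (w z))
    :
    ∀ μ : ℂ, a 3 - μ * (a 2) ^ 2 = (10 * b / (ϱ * (ϑ3 : ℂ))) *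
      (p1 * w2 +
        (p2 + b * p1 ^ 2 * (10 * (ϑ2 : ℂ) - 9 * μ * (ϑ3 : ℂ)) / (10 * ϱ * (ϑ2 : ℂ) ^ 2))
          * w1 ^ 2) :=
  starlike_fekete_szego_identity_general q hq0 hq1 a ha0 ha1 F DqF hF hDqF ϑ2 ϑ3 hϑ2 hϑ3 w hw hw0 w1
    w2 hw1 hw2 β ϱ hϱ b hb p hp hp0 p1 p2 hp1 hp2 hFne hsub
end

section
/- Let 0 ≤ α < 1 and take p(z) = (1 + (1 − 2α)z)/(1 − z), so that p₁ = p₂ = 2(1 − α). Under the spirallike-starlike subordination hypothesis with this p, writing ϑ₂ = [2]_q − 1 and ϑ₃ = [3]_q − 1, for every complex number μ one has |a₃ − μ·a₂²| ≤ (20·|b|·(1 − α)/(|ϱ|·ϑ₃)) · max{ 1, | 1 + b·(1 − α)·(10·ϑ₂ − 9·μ·ϑ₃)/(5·ϱ·ϑ₂²) | }. -/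
/-!
Write `F z = z + A₂ z² + A₃ z³ + ⋯`, so that `a₂ = -3 A₂` and `a₃ = 10 A₃`, and
`w z = c₁ z + c₂ z² + ⋯`. Near `0` the subordination says
`ϱ (z D_qF z - F z) (1 - w z) = 2 b (1 - α) F z w z`, where
`z D_qF z - F z = ϑ₂ A₂ z² + ϑ₃ A₃ z³ + ⋯`.
Comparing the coefficients of `z²` and `z³` expresses `A₂, A₃` through `c₁, c₂` and turns
`a₃ - μ a₂²` into `K (c₂ + s c₁²)`, with `K = 20 b (1 - α) / (ϱ ϑ₃)` and `s` the number inside the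
maximum. The Schwarz–Pick inequality for `w z / z` gives `|c₂| ≤ 1 - |c₁|²`, hence
`|c₂ + s c₁²| ≤ (1 - |c₁|²) + |c₁|² |s| ≤ max 1 |s|`.
-/

open Metric Set Filter Function Topology ComplexConjugate

section NontriviallyNormedField

variable {𝕜 E : Type*} [NontriviallyNormedField 𝕜] [NormedAddCommGroup E] [NormedSpace 𝕜 E]

theorem eq_sum_add_pow_smul_iterate_dslope (f : 𝕜 → E) (z₀ z : 𝕜) (n : ℕ) :
    f z = ∑ k ∈ Finset.range n, (z - z₀) ^ k • (swap dslope z₀)^[k] f z₀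
      + (z - z₀) ^ n • (swap dslope z₀)^[n] f z := by
  induction n with
  | zero => simp
  | succ n ih =>
    have h := sub_smul_dslope ((swap dslope z₀)^[n] f) z₀ z
    rw [ih, Finset.sum_range_succ, iterate_succ_apply', swap_def, pow_succ, mul_smul, h,
      smul_sub]
    abel

theorem HasFPowerSeriesAt.iterate_dslope_apply_self {f : 𝕜 → E}
    {p : FormalMultilinearSeries 𝕜 𝕜 E} {z₀ : 𝕜} (hp : HasFPowerSeriesAt f p z₀) (n : ℕ) :
    (swap dslope z₀)^[n] f z₀ = p.coeff n := by
  rw [← (hp.has_fpower_series_iterate_dslope_fslope n).coeff_zero 1,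
    ← FormalMultilinearSeries.coeff, FormalMultilinearSeries.coeff_iterate_fslope, zero_add]

theorem HasDerivAt.eq_and_eq_of_eventuallyEq_nhdsNE {f g : 𝕜 → E} {f' g' : E} {x : 𝕜}
    (hf : HasDerivAt f f' x) (hg : HasDerivAt g g' x) (h : f =ᶠ[𝓝[≠] x] g) :
    f x = g x ∧ f' = g' := by
  have hx : f x = g x :=
    tendsto_nhds_unique ((hf.continuousAt.tendsto.mono_left nhdsWithin_le_nhds).congr' h)
      (hg.continuousAt.tendsto.mono_left nhdsWithin_le_nhds)
  refine ⟨hx, hf.unique (hg.congr_of_eventuallyEq ?_)⟩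
  rw [← nhdsNE_sup_pure, EventuallyEq, eventually_sup, eventually_pure]
  exact ⟨h, hx⟩

theorem hasDerivAt_mul_of_continuousAt {g : 𝕜 → 𝕜} (hg : ContinuousAt g 0) :
    HasDerivAt (fun z => z * g z) (g 0) 0 := by
  rw [hasDerivAt_iff_tendsto_slope]
  refine (hg.tendsto.mono_left nhdsWithin_le_nhds).congr' ?_
  filter_upwards [self_mem_nhdsWithin] with z (hz : z ≠ 0)
  rw [slope_def_field]
  field_simp
  ring

end NontriviallyNormedField

open scoped NNReal in
theorem hasFPowerSeriesOnBall_ofScalars_of_hasSum {c : ℕ → ℂ} {f : ℂ → ℂ} {r : ℝ≥0}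
    (hr : 0 < r) (hf : ∀ z ∈ ball (0 : ℂ) r, HasSum (fun n => c n * z ^ n) (f z)) :
    HasFPowerSeriesOnBall f (FormalMultilinearSeries.ofScalars ℂ c) 0 r := by
  refine ⟨?_, by exact_mod_cast hr, fun {y} hy => ?_⟩
  · refine le_of_forall_lt_imp_le_of_dense fun s hs => ?_
    lift s to ℝ≥0 using ne_top_of_lt hs
    refine FormalMultilinearSeries.le_radius_of_tendsto _ (l := 0) ?_
    have hs' : ((s : ℝ) : ℂ) ∈ ball (0 : ℂ) r := by
      simpa [abs_of_nonneg s.coe_nonneg] using hs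
    simpa [FormalMultilinearSeries.ofScalars_norm, abs_of_nonneg s.coe_nonneg] using
      (hf _ hs').summable.tendsto_atTop_zero.norm
  · have hy' : y ∈ ball (0 : ℂ) r := by simpa using hy
    simpa [FormalMultilinearSeries.ofScalars_apply_eq, mul_comm] using hf y hy'

namespace Complex

theorem norm_sub_le_norm_one_sub_conj_mul_s9 {u c : ℂ} (hu : ‖u‖ ≤ 1) (hc : ‖c‖ ≤ 1) :
    ‖u - c‖ ≤ ‖1 - conj c * u‖ := by
  have hdiff : ‖1 - conj c * u‖ ^ 2 - ‖u - c‖ ^ 2 = (1 - ‖u‖ ^ 2) * (1 - ‖c‖ ^ 2) := by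
    simp only [Complex.sq_norm, normSq_apply, sub_re, sub_im, mul_re, mul_im, conj_re, conj_im,
      one_re, one_im]
    ring
  have h1 : ‖u‖ ^ 2 ≤ 1 := pow_le_one₀ (norm_nonneg u) hu
  have h2 : ‖c‖ ^ 2 ≤ 1 := pow_le_one₀ (norm_nonneg c) hc
  exact (sq_le_sq₀ (norm_nonneg _) (norm_nonneg _)).mp
    (by nlinarith [mul_nonneg (sub_nonneg.mpr h1) (sub_nonneg.mpr h2)])

theorem norm_deriv_le_one_sub_sq_of_mapsTo_closedBall {φ : ℂ → ℂ}
    (hd : DifferentiableOn ℂ φ (ball 0 1)) (hφ : MapsTo φ (ball 0 1) (closedBall 0 1)) :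
    ‖deriv φ 0‖ ≤ 1 - ‖φ 0‖ ^ 2 := by
  set c := φ 0
  have h0 : (0 : ℂ) ∈ ball 0 1 := mem_ball_self one_pos
  have hnorm : ∀ z ∈ ball (0 : ℂ) 1, ‖φ z‖ ≤ 1 := fun z hz => by simpa using hφ hz
  rcases (hnorm 0 h0).lt_or_eq with hc | hc
  · -- compose `φ` with the disk automorphism sending `c` to `0` and apply the Schwarz lemma
    have hden : ∀ z ∈ ball (0 : ℂ) 1, 1 - conj c * φ z ≠ 0 := fun z hz h => by
      have : ‖conj c * φ z‖ < 1 := by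
        rw [norm_mul, norm_conj]
        exact mul_lt_one_of_nonneg_of_lt_one_left (norm_nonneg _) hc (hnorm z hz)
      rw [← sub_eq_zero.mp h, norm_one] at this
      exact this.false
    set ψ : ℂ → ℂ := fun z => (φ z - c) / (1 - conj c * φ z)
    have hψd : DifferentiableOn ℂ ψ (ball 0 1) :=
      (hd.sub_const c).div ((differentiableOn_const 1).sub (hd.const_mul _)) hden
    have hψ : MapsTo ψ (ball 0 1) (closedBall (ψ 0) 1) := fun z hz => by
      simp only [ψ, c, sub_self, zero_div, mem_closedBall, dist_zero_right, norm_div]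
      exact div_le_one_of_le₀ (norm_sub_le_norm_one_sub_conj_mul_s9 (hnorm z hz) hc.le)
        (norm_nonneg _)
    have hcc : conj c * c = (‖c‖ ^ 2 : ℂ) := conj_mul' c
    have hder : HasDerivAt ψ (deriv φ 0 / (1 - ‖c‖ ^ 2)) 0 := by
      have hφ0 : HasDerivAt φ (deriv φ 0) 0 :=
        (hd.differentiableAt (ball_mem_nhds 0 one_pos)).hasDerivAt
      refine ((hφ0.sub_const c).div ((hφ0.const_mul (conj c)).const_sub 1)
        (hden 0 h0)).congr_deriv ?_
      have hne : (1 : ℂ) - ‖c‖ ^ 2 ≠ 0 := hcc ▸ hden 0 h0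
      rw [show φ 0 = c from rfl, sub_self, zero_mul, sub_zero, hcc]
      field_simp
    have hc' : (1 : ℂ) - ‖c‖ ^ 2 = ((1 - ‖c‖ ^ 2 : ℝ) : ℂ) := by push_cast; ring
    have hpos : 0 < 1 - ‖c‖ ^ 2 := by nlinarith [norm_nonneg c]
    have := norm_deriv_le_div_of_mapsTo_ball hψd hψ one_pos
    rwa [hder.deriv, norm_div, div_one, hc', Complex.norm_of_nonneg hpos.le,
      div_le_one hpos] at this
  · -- `φ` is constant by the maximum modulus principle
    have hmax : IsLocalMax (norm ∘ φ) 0 :=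
      Filter.eventually_of_mem (ball_mem_nhds 0 one_pos) fun z hz =>
        show ‖φ z‖ ≤ ‖φ 0‖ from hc ▸ hnorm z hz
    have hconst : φ =ᶠ[𝓝 0] fun _ => c :=
      eventually_eq_of_isLocalMax_norm
        (Filter.eventually_of_mem (ball_mem_nhds 0 one_pos) fun z hz =>
          hd.differentiableAt (isOpen_ball.mem_nhds hz)) hmax
    rw [hconst.deriv_eq, deriv_const, norm_zero, show ‖c‖ = 1 from hc]
    norm_num

end Complex

theorem HasFPowerSeriesAt.norm_coeff_two_add_mul_coeff_one_sq_le {w : ℂ → ℂ}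
    {p : FormalMultilinearSeries ℂ ℂ ℂ} (hp : HasFPowerSeriesAt w p 0)
    (hd : DifferentiableOn ℂ w (ball 0 1)) (hw : MapsTo w (ball 0 1) (ball 0 1)) (hw0 : w 0 = 0)
    (s : ℂ) : ‖p.coeff 2 + s * p.coeff 1 ^ 2‖ ≤ max 1 ‖s‖ := by
  set φ := dslope w 0
  have hφd : DifferentiableOn ℂ φ (ball 0 1) :=
    (Complex.differentiableOn_dslope (ball_mem_nhds 0 one_pos)).mpr hd
  have hφ : MapsTo φ (ball 0 1) (closedBall 0 1) := fun z hz => by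
    simpa using Complex.norm_dslope_le_div_of_mapsTo_ball hd
      (by simpa [hw0] using hw.mono_right ball_subset_closedBall) hz
  have hc1 : p.coeff 1 = φ 0 := (hp.iterate_dslope_apply_self 1).symm
  have hc2 : p.coeff 2 = deriv φ 0 := by
    rw [← hp.iterate_dslope_apply_self 2, ← dslope_same]
    rfl
  have h1 : ‖φ 0‖ ^ 2 ≤ 1 :=
    pow_le_one₀ (norm_nonneg _) (by simpa using hφ (mem_ball_self one_pos))
  have h2 := Complex.norm_deriv_le_one_sub_sq_of_mapsTo_closedBall hφd hφ
  rw [hc1, hc2]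
  calc ‖deriv φ 0 + s * φ 0 ^ 2‖ ≤ ‖deriv φ 0‖ + ‖s‖ * ‖φ 0‖ ^ 2 := by
        rw [← norm_pow, ← norm_mul]
        exact norm_add_le _ _
    -- a convex combination of `1` and `‖s‖`
    _ ≤ max 1 ‖s‖ := by
        nlinarith [mul_nonneg (sub_nonneg.2 h1) (sub_nonneg.2 (le_max_left 1 ‖s‖)),
          mul_nonneg (sq_nonneg ‖φ 0‖) (sub_nonneg.2 (le_max_right 1 ‖s‖))]

theorem exists_qDifference_expansion {F Φ : ℂ → ℂ} {q A₂ : ℂ} (hq : q ≠ 1)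
    (hF : ∀ z, F z = z + A₂ * z ^ 2 + z ^ 3 * Φ z) (hΦ : ContinuousAt Φ 0) :
    ∃ G : ℂ → ℂ, ContinuousAt G 0 ∧ G 0 = (q + q ^ 2) * Φ 0 ∧
      ∀ z, (F z - F (q * z)) / (1 - q) - F z = z ^ 2 * (q * A₂ + z * G z) := by
  have hq' : 1 - q ≠ 0 := sub_ne_zero.mpr hq.symm
  have hΦq : ContinuousAt (fun z => Φ (q * z)) 0 :=
    ContinuousAt.comp (g := Φ) (by rwa [mul_zero]) (continuousAt_id.const_mul q)
  refine ⟨fun z => (Φ z - q ^ 3 * Φ (q * z)) / (1 - q) - Φ z,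
    ((hΦ.sub (hΦq.const_mul _)).div_const _).sub hΦ, ?_, fun z => ?_⟩
  · simp only [mul_zero]
    field_simp
    ring
  · rw [hF, hF]
    field_simp
    ring

theorem coeff_relations_of_expansions {F w Φ ψ : ℂ → ℂ} {q ϱ κ A₂ c₁ : ℂ}
    (hq : q ≠ 1)
    (hF : ∀ z, F z = z + A₂ * z ^ 2 + z ^ 3 * Φ z) (hΦ : ContinuousAt Φ 0)
    (hw : ∀ z, w z = z * (c₁ + z * ψ z)) (hψ : ContinuousAt ψ 0)
    (h : ∀ᶠ z in 𝓝[≠] 0,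
      ϱ * ((F z - F (q * z)) / (1 - q) - F z) * (1 - w z) = κ * (F z * w z)) :
    ϱ * (q * A₂) = κ * c₁ ∧
      ϱ * ((q + q ^ 2) * Φ 0 - q * A₂ * c₁) = κ * (A₂ * c₁ + ψ 0) := by
  obtain ⟨G, hG, hG0, hFG⟩ := exists_qDifference_expansion hq hF hΦ
  have hψ' : ContinuousAt (fun z => c₁ + z * ψ z) 0 :=
    continuousAt_const.add (continuousAt_id.mul hψ)
  have hΦ' : ContinuousAt (fun z => A₂ + z * Φ z) 0 :=
    continuousAt_const.add (continuousAt_id.mul hΦ)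
  -- Both sides of `h` are `z ^ 2` times `P z` and `Q z`; comparing the values and derivatives
  -- of `P` and `Q` at `0` compares the coefficients of `z ^ 2` and `z ^ 3`.
  set P : ℂ → ℂ := fun z => ϱ * ((q * A₂ + z * G z) * (1 - z * (c₁ + z * ψ z)))
  set Q : ℂ → ℂ := fun z => κ * ((1 + z * (A₂ + z * Φ z)) * (c₁ + z * ψ z))
  have hPQ : P =ᶠ[𝓝[≠] 0] Q := by
    filter_upwards [h, self_mem_nhdsWithin] with z hz hz0
    refine mul_left_cancel₀ (pow_ne_zero 2 hz0) ?_
    calc z ^ 2 * P z = ϱ * ((F z - F (q * z)) / (1 - q) - F z) * (1 - w z) := by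
          rw [hFG, hw]
          ring
      _ = κ * (F z * w z) := hz
      _ = z ^ 2 * Q z := by
          rw [hF, hw]
          ring
  have hP := (((hasDerivAt_mul_of_continuousAt hG).const_add (q * A₂)).mul
    ((hasDerivAt_mul_of_continuousAt hψ').const_sub 1)).const_mul ϱ
  have hQ := (((hasDerivAt_mul_of_continuousAt hΦ').const_add 1).mul
    ((hasDerivAt_mul_of_continuousAt hψ).const_add c₁)).const_mul κ
  obtain ⟨h₀, h₁⟩ := hP.eq_and_eq_of_eventuallyEq_nhdsNE hQ hPQ
  simp only [Pi.mul_apply, zero_mul, add_zero, sub_zero, mul_one, one_mul] at h₀ h₁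
  rw [← hG0]
  exact ⟨h₀, by linear_combination h₁⟩

theorem coeff_relations_of_qDifference_eq {F w : ℂ → ℂ}
    {pF pw : FormalMultilinearSeries ℂ ℂ ℂ} {q ϱ κ : ℂ} (hq : q ≠ 1)
    (hF : HasFPowerSeriesAt F pF 0) (hF0 : pF.coeff 0 = 0) (hF1 : pF.coeff 1 = 1)
    (hw : HasFPowerSeriesAt w pw 0) (hw0 : pw.coeff 0 = 0)
    (h : ∀ᶠ z in 𝓝[≠] 0,
      ϱ * ((F z - F (q * z)) / (1 - q) - F z) * (1 - w z) = κ * (F z * w z)) :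
    ϱ * (q * pF.coeff 2) = κ * pw.coeff 1 ∧
      ϱ * ((q + q ^ 2) * pF.coeff 3 - q * pF.coeff 2 * pw.coeff 1)
        = κ * (pF.coeff 2 * pw.coeff 1 + pw.coeff 2) := by
  have hFz (z : ℂ) : F z = z + pF.coeff 2 * z ^ 2 + z ^ 3 * (swap dslope 0)^[3] F z := by
    rw [eq_sum_add_pow_smul_iterate_dslope F 0 z 3]
    simp only [Finset.sum_range_succ, Finset.sum_range_zero, hF.iterate_dslope_apply_self, hF0,
      hF1, sub_zero, smul_eq_mul]
    ring
  have hwz (z : ℂ) : w z = z * (pw.coeff 1 + z * (swap dslope 0)^[2] w z) := by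
    rw [eq_sum_add_pow_smul_iterate_dslope w 0 z 2]
    simp only [Finset.sum_range_succ, Finset.sum_range_zero, hw.iterate_dslope_apply_self, hw0,
      sub_zero, smul_eq_mul]
    ring
  rw [← hF.iterate_dslope_apply_self 3, ← hw.iterate_dslope_apply_self 2]
  exact coeff_relations_of_expansions hq hFz
    (hF.has_fpower_series_iterate_dslope_fslope 3).continuousAt hwz
    (hw.has_fpower_series_iterate_dslope_fslope 2).continuousAt h

theorem eventually_qDifference_eq_of_subordination {F DqF w : ℂ → ℂ}
    {p : FormalMultilinearSeries ℂ ℂ ℂ} {q ϱ b α : ℂ} (hq : q ≠ 1)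
    (hF : HasFPowerSeriesAt F p 0) (hF1 : p.coeff 1 = 1) (hb : b ≠ 0)
    (hDqF : ∀ z : ℂ, z ≠ 0 → DqF z = (F z - F (q * z)) / ((1 - q) * z))
    (hw : ∀ z ∈ ball (0 : ℂ) 1, ‖w z‖ < 1)
    (hsub : ∀ z ∈ ball (0 : ℂ) 1, z ≠ 0 →
      1 + (1 / b) * (ϱ * (z * DqF z / F z) - ϱ) = (1 + (1 - 2 * α) * w z) / (1 - w z)) :
    ∀ᶠ z in 𝓝[≠] 0,
      ϱ * ((F z - F (q * z)) / (1 - q) - F z) * (1 - w z) = 2 * b * (1 - α) * (F z * w z) := by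
  have hp : p ≠ 0 := by
    rintro rfl
    exact one_ne_zero (hF1.symm.trans (FormalMultilinearSeries.coeff_eq_zero.mpr rfl))
  have hq' : 1 - q ≠ 0 := sub_ne_zero.mpr hq.symm
  filter_upwards [self_mem_nhdsWithin, mem_nhdsWithin_of_mem_nhds (ball_mem_nhds 0 one_pos),
    hF.locally_ne_zero hp] with z (hz0 : z ≠ 0) hz hFz
  have hwz : 1 - w z ≠ 0 := sub_ne_zero.mpr fun h => by simpa [← h] using hw z hz
  have h := hsub z hz hz0
  rw [hDqF z hz0] at h
  generalize F (q * z) = Fq at h ⊢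
  field_simp at h ⊢
  linear_combination h

theorem fekete_szego_functional_eq {ϱ ϑ₂ ϑ₃ b L c₁ c₂ μ A₂ A₃ : ℂ}
    (hϱ : ϱ ≠ 0) (hϑ₂ : ϑ₂ ≠ 0) (hϑ₃ : ϑ₃ ≠ 0)
    (h₂ : ϱ * (ϑ₂ * A₂) = 2 * b * L * c₁)
    (h₃ : ϱ * (ϑ₃ * A₃ - ϑ₂ * A₂ * c₁) = 2 * b * L * (A₂ * c₁ + c₂)) :
    10 * A₃ - μ * (-3 * A₂) ^ 2 = 20 * b * L / (ϱ * ϑ₃) *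
      (c₂ + (1 + b * L * (10 * ϑ₂ - 9 * μ * ϑ₃) / (5 * ϱ * ϑ₂ ^ 2)) * c₁ ^ 2) := by
  have hA₂ : A₂ = 2 * b * L * c₁ / (ϱ * ϑ₂) := by
    rw [eq_div_iff (mul_ne_zero hϱ hϑ₂)]
    linear_combination h₂
  have hA₃ : A₃ = (ϱ * ϑ₂ * A₂ * c₁ + 2 * b * L * (A₂ * c₁ + c₂)) / (ϱ * ϑ₃) := by
    rw [eq_div_iff (mul_ne_zero hϱ hϑ₃)]
    linear_combination h₃
  rw [hA₃, hA₂]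
  field_simp
  ring

theorem starlike_fekete_szego_bound_alpha_general
    (q : ℝ) (hq0 : 0 < q) (hq1 : q < 1)
    (a : ℕ → ℂ) (ha1 : a 1 = 1)
    (F DqF : ℂ → ℂ)
    (hF : ∀ z ∈ Metric.ball (0 : ℂ) 1,
      HasSum (fun n : ℕ =>
        (-1 : ℂ) ^ (n - 1) * a n / (((2 * n - 1 : ℕ) : ℂ) * ((n - 1).factorial : ℂ)) * z ^ n)
        (F z))
    (hDqF : ∀ z : ℂ, z ≠ 0 → DqF z = (F z - F ((q : ℂ) * z)) / ((1 - (q : ℂ)) * z))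
    (ϑ2 ϑ3 : ℝ)
    (hϑ2 : ϑ2 = (1 - q ^ 2) / (1 - q) - 1)
    (hϑ3 : ϑ3 = (1 - q ^ 3) / (1 - q) - 1)
    (w : ℂ → ℂ)
    (hw : AnalyticOnNhd ℂ w (Metric.ball (0 : ℂ) 1))
    (hw0 : w 0 = 0)
    (hwb : ∀ z ∈ Metric.ball (0 : ℂ) 1, ‖w z‖ < 1)
    (β : ℝ)
    (ϱ : ℂ) (hϱ : ϱ = 1 + Complex.I * (Real.tan β : ℂ))
    (b : ℂ) (hb : b ≠ 0)
    (α : ℝ) (hα1 : α < 1)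
    (hsub : ∀ z ∈ Metric.ball (0 : ℂ) 1, z ≠ 0 →
      1 + (1 / b) * (ϱ * (z * DqF z / F z) - ϱ)
        = (1 + (1 - 2 * (α : ℂ)) * w z) / (1 - w z))
    :
    ∀ μ : ℂ, ‖a 3 - μ * (a 2) ^ 2‖ ≤
      (20 * ‖b‖ * (1 - α) / (‖ϱ‖ * ϑ3)) *
        max 1 (‖1 +
          b * (1 - (α : ℂ)) * (10 * (ϑ2 : ℂ) - 9 * μ * (ϑ3 : ℂ)) / (5 * ϱ * (ϑ2 : ℂ) ^ 2)‖) := by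
  intro μ
  have hq : (q : ℂ) ≠ 1 := by exact_mod_cast hq1.ne
  have hq' : 1 - q ≠ 0 := (sub_pos.mpr hq1).ne'
  obtain rfl : ϑ3 = q + q ^ 2 := by rw [hϑ3]; field_simp; ring
  rw [show ϑ2 = q by rw [hϑ2]; field_simp; ring]
  have hϱ0 : ϱ ≠ 0 := fun h => by simpa [h] using congrArg Complex.re hϱ
  set A : ℕ → ℂ := fun n =>
    (-1 : ℂ) ^ (n - 1) * a n / (((2 * n - 1 : ℕ) : ℂ) * ((n - 1).factorial : ℂ))
  have hpF : HasFPowerSeriesAt F (FormalMultilinearSeries.ofScalars ℂ A) 0 :=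
    (hasFPowerSeriesOnBall_ofScalars_of_hasSum (r := 1) one_pos
      fun z hz => hF z (by simpa using hz)).hasFPowerSeriesAt
  have hA₁ : (FormalMultilinearSeries.ofScalars ℂ A).coeff 1 = 1 := by
    simp [FormalMultilinearSeries.coeff_ofScalars, A, ha1]
  obtain ⟨pw, hpw⟩ := hw 0 (mem_ball_self one_pos)
  -- `A 0 = 0` whatever `a 0` is, since `(2 * 0 - 1 : ℕ) = 0` and `x / 0 = 0`
  obtain ⟨h₂, h₃⟩ := coeff_relations_of_qDifference_eq hq hpF (by simp [A]) hA₁ hpw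
    ((hpw.coeff_zero 1).trans hw0)
    (eventually_qDifference_eq_of_subordination hq hpF hA₁ hb hDqF hwb hsub)
  simp only [FormalMultilinearSeries.coeff_ofScalars] at h₂ h₃
  have ha₂ : a 2 = -3 * A 2 := by simp [A]; ring
  have ha₃ : a 3 = 10 * A 3 := by simp [A]; ring
  have hK : ‖20 * b * (1 - (α : ℂ)) / (ϱ * (q + q ^ 2))‖
      = 20 * ‖b‖ * (1 - α) / (‖ϱ‖ * (q + q ^ 2)) := by
    have hα : ‖(1 : ℂ) - α‖ = 1 - α :=
      mod_cast Complex.norm_of_nonneg (sub_nonneg.mpr hα1.le)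
    have hq2 : ‖(q : ℂ) + q ^ 2‖ = q + q ^ 2 :=
      mod_cast Complex.norm_of_nonneg (by positivity)
    rw [norm_div, norm_mul, norm_mul, norm_mul, hα, hq2, Complex.norm_ofNat]
  push_cast
  rw [ha₂, ha₃, fekete_szego_functional_eq hϱ0 (by exact_mod_cast hq0.ne')
    (by exact_mod_cast (by positivity : (0 : ℝ) < q + q ^ 2).ne') h₂ h₃,
    norm_mul, hK]
  gcongr
  exact hpw.norm_coeff_two_add_mul_coeff_one_sq_le hw.differentiableOn
    (fun z hz => by simpa using hwb z hz) hw0 _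

theorem starlike_fekete_szego_bound_alpha
    (q : ℝ) (hq0 : 0 < q) (hq1 : q < 1)
    (a : ℕ → ℂ) (ha0 : a 0 = 0) (ha1 : a 1 = 1)
    (f F DqF : ℂ → ℂ)
    (hf : ∀ z ∈ Metric.ball (0 : ℂ) 1, HasSum (fun n : ℕ => a n * z ^ n) (f z))
    (hF : ∀ z ∈ Metric.ball (0 : ℂ) 1,
      HasSum (fun n : ℕ =>
        (-1 : ℂ) ^ (n - 1) * a n / (((2 * n - 1 : ℕ) : ℂ) * ((n - 1).factorial : ℂ)) * z ^ n)
        (F z))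
    (hDq0 : DqF 0 = 1)
    (hDqF : ∀ z : ℂ, z ≠ 0 → DqF z = (F z - F ((q : ℂ) * z)) / ((1 - (q : ℂ)) * z))
    (ϑ2 ϑ3 : ℝ)
    (hϑ2 : ϑ2 = (1 - q ^ 2) / (1 - q) - 1)
    (hϑ3 : ϑ3 = (1 - q ^ 3) / (1 - q) - 1)
    (w : ℂ → ℂ)
    (hw : AnalyticOnNhd ℂ w (Metric.ball (0 : ℂ) 1))
    (hw0 : w 0 = 0)
    (hwb : ∀ z ∈ Metric.ball (0 : ℂ) 1, ‖w z‖ < 1)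
    (β : ℝ) (hβ1 : -(Real.pi / 2) < β) (hβ2 : β < Real.pi / 2)
    (ϱ : ℂ) (hϱ : ϱ = 1 + Complex.I * (Real.tan β : ℂ))
    (b : ℂ) (hb : b ≠ 0)
    (α : ℝ) (hα0 : 0 ≤ α) (hα1 : α < 1)
    (hFne : ∀ z ∈ Metric.ball (0 : ℂ) 1, z ≠ 0 → F z ≠ 0)
    (hsub : ∀ z ∈ Metric.ball (0 : ℂ) 1, z ≠ 0 →
      1 + (1 / b) * (ϱ * (z * DqF z / F z) - ϱ)
        = (1 + (1 - 2 * (α : ℂ)) * w z) / (1 - w z))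
    :
    ∀ μ : ℂ, ‖a 3 - μ * (a 2) ^ 2‖ ≤
      (20 * ‖b‖ * (1 - α) / (‖ϱ‖ * ϑ3)) *
        max 1 (‖1 +
          b * (1 - (α : ℂ)) * (10 * (ϑ2 : ℂ) - 9 * μ * (ϑ3 : ℂ)) / (5 * ϱ * (ϑ2 : ℂ) ^ 2)‖) :=
  starlike_fekete_szego_bound_alpha_general q hq0 hq1 a ha1 F DqF hF hDqF ϑ2 ϑ3 hϑ2 hϑ3 w hw hw0 hwb
    β ϱ hϱ b hb α hα1 hsub
end

section
/- Under the stated spirallike-convex subordination hypothesis, the Taylor coefficients of f satisfy a₂ = −3·b·p₁·w₁/(ϱ·[2]_q) and a₃ = (5·b/(ϱ·[3]_q))·( p₁·w₂ + p₂·w₁² + b·p₁²·w₁²/ϱ ). -/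
/-!
Write `D = D_qF`. Since `F` and `F(q·)` have the same power series up to the factors `qⁿ`,
`D` is analytic on the disk with Taylor coefficients `dₙ = Kₙ₊₁ [n+1]_q`, where `Kₙ` are the
coefficients of `F`; in particular `d₁ = -a₂[2]_q/3` and `d₂ = a₃[3]_q/10`.
Clearing denominators in the subordination equation gives
`ϱ z D'(z) = b (p(w(z)) - 1) D(z)` near `0`. The Euler operator `z d/dz` multiplies the
`n`-th Taylor coefficient by `n`, so comparing the coefficients of `z` and `z²` on both sides,
with `p(w(z)) - 1 = p₁w₁ z + (p₁w₂ + p₂w₁²) z² + ⋯` and `D(0) = 1`, gives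
`ϱ d₁ = b p₁w₁` and `2ϱ d₂ = b (p₁w₂ + p₂w₁²) + b p₁w₁ d₁`, which solve to the two formulas.
-/

open Filter Topology FormalMultilinearSeries NNReal

lemma hasFPowerSeriesOnBall_ofScalars_of_hasSum_s10 {c : ℕ → ℂ} {g : ℂ → ℂ} {r : ℝ≥0} (hr : 0 < r)
    (h : ∀ z ∈ Metric.ball (0 : ℂ) r, HasSum (fun n ↦ c n * z ^ n) (g z)) :
    HasFPowerSeriesOnBall g (ofScalars ℂ c) 0 r where
  r_le := by
    refine ENNReal.le_of_forall_nnreal_lt fun t ht ↦ le_radius_of_tendsto _ (l := 0) ?_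
    have ht : ((t : ℝ) : ℂ) ∈ Metric.ball (0 : ℂ) r := by
      simpa [abs_of_nonneg t.coe_nonneg] using ht
    simpa [ofScalars_norm, abs_of_nonneg t.coe_nonneg] using
      (h _ ht).summable.tendsto_atTop_zero.norm
  r_pos := by simpa using hr
  hasSum {y} hy := by
    simpa [ofScalars_apply_eq, mul_comm] using h y (by simpa using hy)

lemma HasFPowerSeriesAt.iteratedDeriv_eq_factorial_mul {𝕜 : Type*} [NontriviallyNormedField 𝕜]
    [CompleteSpace 𝕜] [CharZero 𝕜] {f : 𝕜 → 𝕜} {c : ℕ → 𝕜} {x : 𝕜}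
    (h : HasFPowerSeriesAt f (ofScalars 𝕜 c) x) (n : ℕ) :
    iteratedDeriv n f x = n.factorial * c n := by
  have := congrArg (coeff · n) (h.analyticAt.hasFPowerSeriesAt.eq_formalMultilinearSeries h)
  simp only [coeff_ofScalars] at this
  rw [← this, mul_div_cancel₀]
  exact_mod_cast n.factorial_ne_zero

section IteratedDeriv

variable {𝕜 : Type*} [NontriviallyNormedField 𝕜]

lemma iteratedDeriv_mul_deriv_zero [CompleteSpace 𝕜] {f : 𝕜 → 𝕜} (hf : AnalyticAt 𝕜 f 0)
    (n : ℕ) : iteratedDeriv n (fun z ↦ z * deriv f z) 0 = n * iteratedDeriv n f 0 := by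
  rw [iteratedDeriv_fun_mul (f := fun z ↦ z) contDiffAt_id hf.deriv.contDiffAt]
  rcases n with _ | n
  · simp
  rw [Finset.sum_eq_single 1]
  · simp [iteratedDeriv_succ']
  · intro i _ hi
    simp [iteratedDeriv_fun_id_zero, hi]
  · simp

lemma iteratedDeriv_two_mul {f g : 𝕜 → 𝕜} {x : 𝕜} (hf : ContDiffAt 𝕜 2 f x)
    (hg : ContDiffAt 𝕜 2 g x) :
    iteratedDeriv 2 (f * g) x =
      iteratedDeriv 2 f x * g x + 2 * deriv f x * deriv g x + f x * iteratedDeriv 2 g x := by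
  rw [iteratedDeriv_mul hf hg, Finset.sum_range_succ, Finset.sum_range_succ, Finset.sum_range_one]
  norm_num [iteratedDeriv_one]
  ring

lemma iteratedDeriv_sub_const {F : Type*} [NormedAddCommGroup F] [NormedSpace 𝕜 F] {n : ℕ}
    (hn : n ≠ 0) (f : 𝕜 → F) (c : F) {x : 𝕜} :
    iteratedDeriv n (fun z ↦ f z - c) x = iteratedDeriv n f x := by
  simpa [sub_eq_neg_add] using
    iteratedDeriv_const_add (Nat.pos_of_ne_zero hn) (-c) (f := f) (x := x)

lemma deriv_const_mul_comp_sub {g w : 𝕜 → 𝕜} {x : 𝕜} (hg : DifferentiableAt 𝕜 g (w x))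
    (hw : DifferentiableAt 𝕜 w x) (c d : 𝕜) :
    deriv (fun z ↦ c * (g (w z) - d)) x = c * (deriv g (w x) * deriv w x) :=
  (((hg.hasDerivAt.comp x hw.hasDerivAt).sub_const d).const_mul c).deriv

lemma iteratedDeriv_two_const_mul_comp_sub {g w : 𝕜 → 𝕜} {x : 𝕜} (hg : ContDiffAt 𝕜 2 g (w x))
    (hw : ContDiffAt 𝕜 2 w x) (c d : 𝕜) :
    iteratedDeriv 2 (fun z ↦ c * (g (w z) - d)) x =
      c * (iteratedDeriv 2 g (w x) * deriv w x ^ 2 + deriv g (w x) * iteratedDeriv 2 w x) := by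
  rw [iteratedDeriv_const_mul_field, iteratedDeriv_sub_const two_ne_zero, ← Function.comp_def,
    iteratedDeriv_comp_two hg hw]

variable [CompleteSpace 𝕜] {D E : 𝕜 → 𝕜} {ϱ : 𝕜}

lemma deriv_eq_of_eventuallyEq_mul (hD : AnalyticAt 𝕜 D 0) (hE : DifferentiableAt 𝕜 E 0)
    (hD0 : D 0 = 1) (hE0 : E 0 = 0) (h : (fun z ↦ ϱ * (z * deriv D z)) =ᶠ[𝓝 0] E * D) :
    ϱ * deriv D 0 = deriv E 0 := by
  simpa [iteratedDeriv_mul_deriv_zero hD, deriv_mul hE hD.differentiableAt, hE0, hD0] using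
    h.iteratedDeriv_eq 1

lemma iteratedDeriv_two_eq_of_eventuallyEq_mul (hD : AnalyticAt 𝕜 D 0) (hE : ContDiffAt 𝕜 2 E 0)
    (hD0 : D 0 = 1) (hE0 : E 0 = 0) (h : (fun z ↦ ϱ * (z * deriv D z)) =ᶠ[𝓝 0] E * D) :
    ϱ * (2 * iteratedDeriv 2 D 0) = iteratedDeriv 2 E 0 + 2 * deriv E 0 * deriv D 0 := by
  have := h.iteratedDeriv_eq 2
  rwa [iteratedDeriv_const_mul_field, iteratedDeriv_mul_deriv_zero hD,
    iteratedDeriv_two_mul hE hD.contDiffAt, hE0, hD0, zero_mul, add_zero, mul_one] at this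

end IteratedDeriv

lemma one_sub_pow_div_one_sub_pos {q : ℝ} (hq0 : 0 ≤ q) (hq1 : q < 1) {n : ℕ} (hn : n ≠ 0) :
    0 < (1 - q ^ n) / (1 - q) :=
  div_pos (sub_pos.mpr (pow_lt_one₀ hq0 hq1 hn)) (sub_pos.mpr hq1)

/-- The `q`-number `[n]_q`. -/
noncomputable def qNat (q : ℂ) (n : ℕ) : ℂ := (1 - q ^ n) / (1 - q)

lemma hasSum_qDifferenceQuotient {K : ℕ → ℂ} {F D : ℂ → ℂ} {q : ℂ} {r : ℝ}
    (hq : ‖q‖ ≤ 1) (hq1 : q ≠ 1)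
    (hF : ∀ z ∈ Metric.ball (0 : ℂ) r, HasSum (fun n ↦ K n * z ^ n) (F z))
    (hD0 : D 0 = K 1) (hD : ∀ z ≠ 0, D z = (F z - F (q * z)) / ((1 - q) * z))
    {z : ℂ} (hz : z ∈ Metric.ball (0 : ℂ) r) :
    HasSum (fun n ↦ K (n + 1) * qNat q (n + 1) * z ^ n) (D z) := by
  have hq1' : 1 - q ≠ 0 := sub_ne_zero.mpr hq1.symm
  rcases eq_or_ne z 0 with rfl | hz0
  · convert hasSum_single (f := fun n ↦ K (n + 1) * qNat q (n + 1) * 0 ^ n) 0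
      fun n hn ↦ by simp [zero_pow hn]
    simp [hD0, qNat, div_self hq1']
  have hqz : q * z ∈ Metric.ball (0 : ℂ) r := by
    rw [mem_ball_zero_iff] at hz ⊢
    exact (norm_mul_le q z).trans_lt ((mul_le_of_le_one_left (norm_nonneg z) hq).trans_lt hz)
  have hdiff := ((hF z hz).sub (hF _ hqz)).div_const ((1 - q) * z)
  rw [← hasSum_nat_add_iff' 1, Finset.sum_range_one, pow_zero, pow_zero, sub_self, zero_div,
    sub_zero, ← hD z hz0] at hdiff
  have hterm (n : ℕ) : (K (n + 1) * z ^ (n + 1) - K (n + 1) * (q * z) ^ (n + 1)) / ((1 - q) * z)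
      = K (n + 1) * qNat q (n + 1) * z ^ n := by
    rw [qNat, mul_pow]
    field_simp
    ring
  simpa only [hterm] using hdiff

lemma mul_deriv_eq_of_subordination {D : ℂ → ℂ} {z ϱ b P : ℂ} (hD : DifferentiableAt ℂ D z)
    (hDz : D z ≠ 0) (hb : b ≠ 0)
    (h : 1 + 1 / b * (ϱ * (deriv (fun u ↦ u * D u) z / D z) - ϱ) = P) :
    ϱ * (z * deriv D z) = b * (P - 1) * D z := by
  rw [deriv_fun_mul differentiableAt_fun_id hD, deriv_id''] at h
  rw [← h]
  field_simp
  ring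

theorem convex_coeff_formulas_general
    (q : ℝ) (hq0 : 0 < q) (hq1 : q < 1)
    (a : ℕ → ℂ) (ha1 : a 1 = 1)
    (F DqF : ℂ → ℂ)
    (hF : ∀ z ∈ Metric.ball (0 : ℂ) 1,
      HasSum (fun n : ℕ =>
        (-1 : ℂ) ^ (n - 1) * a n / (((2 * n - 1 : ℕ) : ℂ) * ((n - 1).factorial : ℂ)) * z ^ n)
        (F z))
    (hDq0 : DqF 0 = 1)
    (hDqF : ∀ z : ℂ, z ≠ 0 → DqF z = (F z - F ((q : ℂ) * z)) / ((1 - (q : ℂ)) * z))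
    (Q2 Q3 : ℝ)
    (hQ2 : Q2 = (1 - q ^ 2) / (1 - q))
    (hQ3 : Q3 = (1 - q ^ 3) / (1 - q))
    (w : ℂ → ℂ)
    (hw : AnalyticOnNhd ℂ w (Metric.ball (0 : ℂ) 1))
    (hw0 : w 0 = 0)
    (w1 w2 : ℂ) (hw1 : w1 = deriv w 0) (hw2 : w2 = iteratedDeriv 2 w 0 / 2)
    (β : ℝ)
    (ϱ : ℂ) (hϱ : ϱ = 1 + Complex.I * (Real.tan β : ℂ))
    (b : ℂ) (hb : b ≠ 0)
    (p : ℂ → ℂ)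
    (hp : AnalyticOnNhd ℂ p (Metric.ball (0 : ℂ) 1))
    (hp0 : p 0 = 1)
    (p1 p2 : ℂ) (hp1 : p1 = deriv p 0) (hp2 : p2 = iteratedDeriv 2 p 0 / 2)
    (hDne : ∀ z ∈ Metric.ball (0 : ℂ) 1, DqF z ≠ 0)
    (hsub : ∀ z ∈ Metric.ball (0 : ℂ) 1,
      1 + (1 / b) * (ϱ * (deriv (fun u => u * DqF u) z / DqF z) - ϱ) = p (w z))
    :
    a 2 = -(3 * b * p1 * w1) / (ϱ * (Q2 : ℂ)) ∧
    a 3 = (5 * b / (ϱ * (Q3 : ℂ))) *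
      (p1 * w2 + p2 * w1 ^ 2 + b * p1 ^ 2 * w1 ^ 2 / ϱ) := by
  have hϱ0 : ϱ ≠ 0 := fun h ↦ by simpa [h] using congrArg Complex.re hϱ
  have hQ2ne : (Q2 : ℂ) ≠ 0 := Complex.ofReal_ne_zero.mpr
    (hQ2 ▸ (one_sub_pow_div_one_sub_pos hq0.le hq1 two_ne_zero).ne')
  have hQ3ne : (Q3 : ℂ) ≠ 0 := Complex.ofReal_ne_zero.mpr
    (hQ3 ▸ (one_sub_pow_div_one_sub_pos hq0.le hq1 three_ne_zero).ne')
  have hD := hasFPowerSeriesOnBall_ofScalars_of_hasSum_s10 one_pos fun z hz ↦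
    hasSum_qDifferenceQuotient (by simp [abs_of_pos hq0, hq1.le]) (by exact_mod_cast hq1.ne)
      (by simpa using hF) (by simp [hDq0, ha1]) hDqF (by simpa using hz)
  have hD1 : deriv DqF 0 = -(a 2) / 3 * Q2 := by
    rw [← iteratedDeriv_one, hD.hasFPowerSeriesAt.iteratedDeriv_eq_factorial_mul, hQ2, qNat]
    push_cast
    norm_num
  have hD2 : iteratedDeriv 2 DqF 0 = a 3 / 5 * Q3 := by
    rw [hD.hasFPowerSeriesAt.iteratedDeriv_eq_factorial_mul, hQ3, qNat]
    push_cast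
    norm_num
    ring
  have hw' : AnalyticAt ℂ w 0 := hw 0 (by simp)
  have hp' : AnalyticAt ℂ p (w 0) := by rw [hw0]; exact hp 0 (by simp)
  have hident : (fun z ↦ ϱ * (z * deriv DqF z)) =ᶠ[𝓝 0] (fun z ↦ b * (p (w z) - 1)) * DqF := by
    filter_upwards [Metric.isOpen_ball.mem_nhds (Metric.mem_ball_self one_pos)] with z hz
    refine mul_deriv_eq_of_subordination ?_ (hDne z hz) hb (hsub z hz)
    exact (hD.analyticAt_of_mem (by rw [Metric.eball_coe]; simpa using hz)).differentiableAt
  have hE0 : b * (p (w 0) - 1) = 0 := by rw [hw0, hp0, sub_self, mul_zero]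
  have hE : AnalyticAt ℂ (fun z ↦ b * (p (w z) - 1)) 0 := by fun_prop
  have key1 := deriv_eq_of_eventuallyEq_mul hD.analyticAt hE.differentiableAt hDq0 hE0 hident
  have key2 := iteratedDeriv_two_eq_of_eventuallyEq_mul hD.analyticAt hE.contDiffAt hDq0 hE0 hident
  rw [deriv_const_mul_comp_sub hp'.differentiableAt hw'.differentiableAt, hw0, hD1] at key1
  rw [deriv_const_mul_comp_sub hp'.differentiableAt hw'.differentiableAt,
    iteratedDeriv_two_const_mul_comp_sub hp'.contDiffAt hw'.contDiffAt, hw0, hD1, hD2] at key2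
  subst hp1 hp2 hw1 hw2
  constructor
  · rw [eq_div_iff (mul_ne_zero hϱ0 hQ2ne)]
    linear_combination (-3) * key1
  · field_simp
    linear_combination (5 * ϱ) * key2 + 10 * b * deriv p 0 * deriv w 0 * key1

theorem convex_coeff_formulas
    (q : ℝ) (hq0 : 0 < q) (hq1 : q < 1)
    (a : ℕ → ℂ) (ha0 : a 0 = 0) (ha1 : a 1 = 1)
    (f F DqF : ℂ → ℂ)
    (hf : ∀ z ∈ Metric.ball (0 : ℂ) 1, HasSum (fun n : ℕ => a n * z ^ n) (f z))
    (hF : ∀ z ∈ Metric.ball (0 : ℂ) 1,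
      HasSum (fun n : ℕ =>
        (-1 : ℂ) ^ (n - 1) * a n / (((2 * n - 1 : ℕ) : ℂ) * ((n - 1).factorial : ℂ)) * z ^ n)
        (F z))
    (hDq0 : DqF 0 = 1)
    (hDqF : ∀ z : ℂ, z ≠ 0 → DqF z = (F z - F ((q : ℂ) * z)) / ((1 - (q : ℂ)) * z))
    (Q2 Q3 : ℝ)
    (hQ2 : Q2 = (1 - q ^ 2) / (1 - q))
    (hQ3 : Q3 = (1 - q ^ 3) / (1 - q))
    (w : ℂ → ℂ)
    (hw : AnalyticOnNhd ℂ w (Metric.ball (0 : ℂ) 1))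
    (hw0 : w 0 = 0)
    (hwb : ∀ z ∈ Metric.ball (0 : ℂ) 1, ‖w z‖ < 1)
    (w1 w2 : ℂ) (hw1 : w1 = deriv w 0) (hw2 : w2 = iteratedDeriv 2 w 0 / 2)
    (β : ℝ) (hβ1 : -(Real.pi / 2) < β) (hβ2 : β < Real.pi / 2)
    (ϱ : ℂ) (hϱ : ϱ = 1 + Complex.I * (Real.tan β : ℂ))
    (b : ℂ) (hb : b ≠ 0)
    (p : ℂ → ℂ)
    (hp : AnalyticOnNhd ℂ p (Metric.ball (0 : ℂ) 1))
    (hp0 : p 0 = 1)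
    (p1 p2 : ℂ) (hp1 : p1 = deriv p 0) (hp2 : p2 = iteratedDeriv 2 p 0 / 2)
    (hDne : ∀ z ∈ Metric.ball (0 : ℂ) 1, DqF z ≠ 0)
    (hsub : ∀ z ∈ Metric.ball (0 : ℂ) 1,
      1 + (1 / b) * (ϱ * (deriv (fun u => u * DqF u) z / DqF z) - ϱ) = p (w z))
    :
    a 2 = -(3 * b * p1 * w1) / (ϱ * (Q2 : ℂ)) ∧
    a 3 = (5 * b / (ϱ * (Q3 : ℂ))) *
      (p1 * w2 + p2 * w1 ^ 2 + b * p1 ^ 2 * w1 ^ 2 / ϱ) :=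
  convex_coeff_formulas_general q hq0 hq1 a ha1 F DqF hF hDq0 hDqF Q2 Q3 hQ2 hQ3 w hw hw0 w1 w2 hw1
    hw2 β ϱ hϱ b hb p hp hp0 p1 p2 hp1 hp2 hDne hsub
end
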